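/- Let α ≥ 0, λ > 0, and ν > 1, let f(x; λ, ν) be the GE density, and let u_ν(x) = 1/ν + log(1 − exp(−λx)) be the score function with respect to ν. Then ∫₀^∞ u_ν(x)² f(x; λ, ν)^(1+α) dx = λ^α ν^(α−1) B(1 + α, (1 + α)(ν − 1) + 1) { ν² (ψ'((1 + α)(ν − 1) + 1) − ψ'(ν(1 + α) + 1)) + (1 + ν (ψ((1 + α)(ν − 1) + 1) − ψ(ν(1 + α) + 1)))² }. -/

import Mathlib

open Real Set

/-- The generalized exponential (GE) density with rate `l > 0` and shape `v > 0`. -/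
noncomputable def geDensity (l v x : ℝ) : ℝ :=
  l * v * Real.exp (-(l * x)) * (1 - Real.exp (-(l * x))) ^ (v - 1)

/-- The GE score function with respect to the shape parameter `ν`. -/
noncomputable def geScoreShape (l v x : ℝ) : ℝ :=
  1 / v + Real.log (1 - Real.exp (-(l * x)))

/-- The real Beta function `B(a, b) = Γ(a)Γ(b)/Γ(a+b)`. -/
noncomputable def realBeta (a b : ℝ) : ℝ :=
  Real.Gamma a * Real.Gamma b / Real.Gamma (a + b)

/-- The digamma function `ψ(x) = d/dx log Γ(x)`. -/
noncomputable def digamma : ℝ → ℝ := deriv fun x => Real.log (Real.Gamma x)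

/-- The trigamma function `ψ'`. -/
noncomputable def trigamma : ℝ → ℝ := deriv digamma

/-!
Substituting `u = exp (-λx)` turns the integral into
`λ^α ν^(1+α) ∫₀¹ (1/ν + log (1-u))² u^(p-1) (1-u)^(q-1) du`
with `p = 1+α`, `q = (1+α)(ν-1)+1`. Differentiating under the integral sign in `q`
(dominated via `|log t| ≤ t^(-δ)/δ`) identifies `∫₀¹ u^(p-1) (1-u)^(q-1) log (1-u)^k du`
with `∂ᵏ/∂qᵏ B(p, q)`, and `∂B/∂q = B (ψ(q) - ψ(p+q))` because `Γ' = Γ ψ`.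
Expanding the square leaves `B`, its first and its second `q`-derivative.
-/

open MeasureTheory Filter

theorem Real.analyticAt_Gamma {x : ℝ} (hx : 0 < x) : AnalyticAt ℝ Gamma x := by
  have hdiff : DifferentiableOn ℂ Complex.Gamma {z : ℂ | 0 < z.re} := fun z hz =>
    (Complex.differentiableAt_Gamma z fun m hm => by
      have hre : 0 < (-(m : ℂ)).re := hm ▸ hz
      simp only [Complex.neg_re, Complex.natCast_re] at hre
      linarith [(m.cast_nonneg : (0 : ℝ) ≤ m)]).differentiableWithinAt
  have hC : AnalyticAt ℂ Complex.Gamma (x : ℂ) :=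
    hdiff.analyticAt ((isOpen_lt continuous_const Complex.continuous_re).mem_nhds (by simpa))
  have hR := (Complex.reCLM.analyticAt _).comp
    (hC.restrictScalars.comp (Complex.ofRealCLM.analyticAt x))
  convert hR using 1
  funext t
  simp [Complex.Gamma_ofReal]

theorem analyticAt_log_Gamma {x : ℝ} (hx : 0 < x) : AnalyticAt ℝ (fun y => log (Gamma y)) x :=
  (Real.analyticAt_Gamma hx).log (Gamma_pos_of_pos hx)

theorem hasDerivAt_digamma {x : ℝ} (hx : 0 < x) : HasDerivAt digamma (trigamma x) x :=
  have hA : AnalyticOnNhd ℝ (fun y => log (Gamma y)) (Ioi 0) := fun _ hy =>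
    analyticAt_log_Gamma hy
  (hA.deriv x hx).differentiableAt.hasDerivAt

theorem hasDerivAt_Gamma_eq_mul_digamma {x : ℝ} (hx : 0 < x) :
    HasDerivAt Gamma (Gamma x * digamma x) x := by
  have hΓ := (Real.analyticAt_Gamma hx).differentiableAt.hasDerivAt
  have hψ : digamma x = deriv Gamma x / Gamma x :=
    (hΓ.log (Gamma_pos_of_pos hx).ne').deriv
  rwa [hψ, mul_div_cancel₀ _ (Gamma_pos_of_pos hx).ne']

theorem hasDerivAt_realBeta_right {p q : ℝ} (hp : 0 < p) (hq : 0 < q) :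
    HasDerivAt (realBeta p) (realBeta p q * (digamma q - digamma (p + q))) q := by
  have hpq : 0 < p + q := add_pos hp hq
  have hΓpq : HasDerivAt (fun y => Gamma (p + y)) (Gamma (p + q) * digamma (p + q)) q :=
    (hasDerivAt_Gamma_eq_mul_digamma hpq).comp_const_add p q
  refine (((hasDerivAt_Gamma_eq_mul_digamma hq).const_mul (Gamma p)).div hΓpq
    (Gamma_pos_of_pos hpq).ne').congr_deriv ?_
  rw [realBeta]
  field_simp

theorem ofReal_betaIntegrand {p q u : ℝ} (hu : u ∈ Ioo 0 1) :
    (u : ℂ) ^ ((p : ℂ) - 1) * (1 - (u : ℂ)) ^ ((q : ℂ) - 1) =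
      ((u ^ (p - 1) * (1 - u) ^ (q - 1) : ℝ) : ℂ) := by
  have h1u : (0 : ℝ) ≤ 1 - u := by linarith [hu.2]
  rw [Complex.ofReal_mul, Complex.ofReal_cpow hu.1.le, Complex.ofReal_cpow h1u]
  push_cast
  rfl

theorem integrableOn_betaIntegrand {p q : ℝ} (hp : 0 < p) (hq : 0 < q) :
    IntegrableOn (fun u : ℝ => u ^ (p - 1) * (1 - u) ^ (q - 1)) (Ioo 0 1) := by
  have hC := (Complex.betaIntegral_convergent (u := p) (v := q) (by simpa) (by simpa)).1
  refine IntegrableOn.congr_fun (hC.mono_set Ioo_subset_Ioc_self).re (fun u hu => ?_)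
    measurableSet_Ioo
  simp only [ofReal_betaIntegrand hu, RCLike.re_to_complex, Complex.ofReal_re]

theorem integral_betaIntegrand {p q : ℝ} (hp : 0 < p) (hq : 0 < q) :
    ∫ u in Ioo 0 1, u ^ (p - 1) * (1 - u) ^ (q - 1) = realBeta p q := by
  have hB : Complex.betaIntegral p q =
      ((∫ u in Ioo 0 1, u ^ (p - 1) * (1 - u) ^ (q - 1) : ℝ) : ℂ) := by
    rw [Complex.betaIntegral, intervalIntegral.integral_of_le zero_le_one,
      integral_Ioc_eq_integral_Ioo, setIntegral_congr_fun measurableSet_Ioo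
        (fun u hu => ofReal_betaIntegrand (p := p) (q := q) hu)]
    exact integral_ofReal
  rw [show realBeta p q = _ from ProbabilityTheory.beta_eq_betaIntegralReal p q hp hq, hB,
    Complex.ofReal_re]

theorem abs_log_le_rpow_neg_div {t δ : ℝ} (ht0 : 0 < t) (ht1 : t ≤ 1) (hδ : 0 < δ) :
    |log t| ≤ t ^ (-δ) / δ := by
  rw [abs_of_nonpos (log_nonpos ht0.le ht1), ← log_inv, rpow_neg ht0.le, ← inv_rpow ht0.le]
  exact log_le_rpow_div (inv_nonneg.2 ht0.le) hδ

noncomputable def betaLogIntegrand (p q : ℝ) (k : ℕ) (u : ℝ) : ℝ :=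
  u ^ (p - 1) * (1 - u) ^ (q - 1) * log (1 - u) ^ k

theorem measurable_betaLogIntegrand (p q : ℝ) (k : ℕ) :
    Measurable (betaLogIntegrand p q k) := by
  unfold betaLogIntegrand
  fun_prop

theorem norm_betaLogIntegrand_le {p q δ u : ℝ} (k : ℕ) (hu : u ∈ Ioo 0 1) (hδ : 0 < δ) :
    ‖betaLogIntegrand p q k u‖ ≤ (δ ^ k)⁻¹ * betaLogIntegrand p (q - δ * k) 0 u := by
  obtain ⟨hu0, hu1⟩ := hu
  have ht0 : 0 < 1 - u := by linarith
  have hlog : |log (1 - u)| ^ k ≤ (δ ^ k)⁻¹ * (1 - u) ^ (-δ * k) := by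
    rw [rpow_mul_natCast ht0.le, ← inv_pow, ← mul_pow, inv_mul_eq_div]
    exact pow_le_pow_left₀ (abs_nonneg _) (abs_log_le_rpow_neg_div ht0 (by linarith) hδ) k
  have hsplit : (1 - u) ^ (q - δ * k - 1) = (1 - u) ^ (q - 1) * (1 - u) ^ (-δ * k) := by
    rw [← rpow_add ht0]
    ring_nf
  rw [betaLogIntegrand, betaLogIntegrand, norm_mul, norm_pow, Real.norm_eq_abs, Real.norm_eq_abs,
    abs_of_nonneg (by positivity), pow_zero, mul_one, hsplit]
  calc u ^ (p - 1) * (1 - u) ^ (q - 1) * |log (1 - u)| ^ k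
      ≤ u ^ (p - 1) * (1 - u) ^ (q - 1) * ((δ ^ k)⁻¹ * (1 - u) ^ (-δ * k)) := by gcongr
    _ = _ := by ring

theorem norm_betaLogIntegrand_le_of_le {p q q' u : ℝ} (k : ℕ) (hu : u ∈ Ioo 0 1)
    (hq : q' ≤ q) :
    ‖betaLogIntegrand p q k u‖ ≤ ‖betaLogIntegrand p q' k u‖ := by
  obtain ⟨hu0, hu1⟩ := hu
  have ht0 : 0 < 1 - u := by linarith
  simp only [betaLogIntegrand, norm_mul]
  gcongr
  rw [Real.norm_eq_abs, Real.norm_eq_abs, abs_of_pos (rpow_pos_of_pos ht0 _),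
    abs_of_pos (rpow_pos_of_pos ht0 _)]
  exact rpow_le_rpow_of_exponent_ge ht0 (by linarith) (by linarith)

theorem integrableOn_betaLogIntegrand {p q : ℝ} (hp : 0 < p) (hq : 0 < q) (k : ℕ) :
    IntegrableOn (betaLogIntegrand p q k) (Ioo 0 1) := by
  set δ := q / (k + 1) with hδ_def
  have hδ : 0 < δ := by positivity
  have hqδ : 0 < q - δ * k := by
    have : q - δ * k = δ := by rw [hδ_def]; field_simp; ring
    linarith
  have hB : IntegrableOn (fun u => betaLogIntegrand p (q - δ * k) 0 u) (Ioo 0 1) := by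
    simpa [betaLogIntegrand] using integrableOn_betaIntegrand hp hqδ
  refine (hB.const_mul (δ ^ k)⁻¹).mono'
    (measurable_betaLogIntegrand p q k).aestronglyMeasurable ?_
  filter_upwards [ae_restrict_mem measurableSet_Ioo] with u hu
  exact norm_betaLogIntegrand_le k hu hδ

theorem hasDerivAt_betaLogIntegrand {p q u : ℝ} (k : ℕ) (hu : u ∈ Ioo 0 1) :
    HasDerivAt (fun y => betaLogIntegrand p y k u) (betaLogIntegrand p q (k + 1) u) q := by
  have ht0 : 0 < 1 - u := by linarith [hu.2]
  have h := (((hasStrictDerivAt_const_rpow ht0 (q - 1)).hasDerivAt.comp q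
    ((hasDerivAt_id q).sub_const 1)).const_mul (u ^ (p - 1))).mul_const (log (1 - u) ^ k)
  refine h.congr_deriv ?_
  simp only [betaLogIntegrand, pow_succ]
  ring

noncomputable def betaLogMoment (p q : ℝ) (k : ℕ) : ℝ :=
  ∫ u in Ioo 0 1, betaLogIntegrand p q k u

theorem hasDerivAt_betaLogMoment {p q : ℝ} (hp : 0 < p) (hq : 0 < q) (k : ℕ) :
    HasDerivAt (fun y => betaLogMoment p y k) (betaLogMoment p q (k + 1)) q := by
  have hball : ∀ y ∈ Metric.ball q (q / 2), q / 2 ≤ y := fun y hy => by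
    rw [Metric.mem_ball, Real.dist_eq] at hy
    linarith [(abs_lt.1 hy).1]
  refine (hasDerivAt_integral_of_dominated_loc_of_deriv_le
    (F' := fun y => betaLogIntegrand p y (k + 1)) (Metric.ball_mem_nhds q (half_pos hq))
    (Eventually.of_forall fun y => (measurable_betaLogIntegrand p y k).aestronglyMeasurable)
    (integrableOn_betaLogIntegrand hp hq k)
    (measurable_betaLogIntegrand p q (k + 1)).aestronglyMeasurable ?_
    (integrableOn_betaLogIntegrand hp (half_pos hq) (k + 1)).norm ?_).2
  · filter_upwards [ae_restrict_mem measurableSet_Ioo] with u hu y hy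
    exact norm_betaLogIntegrand_le_of_le (k + 1) hu (hball y hy)
  · filter_upwards [ae_restrict_mem measurableSet_Ioo] with u hu y _
    exact hasDerivAt_betaLogIntegrand k hu

theorem betaLogMoment_zero {p q : ℝ} (hp : 0 < p) (hq : 0 < q) :
    betaLogMoment p q 0 = realBeta p q := by
  simpa [betaLogMoment, betaLogIntegrand] using integral_betaIntegrand hp hq

theorem betaLogMoment_succ_eq_of_hasDerivAt {p q D : ℝ} {k : ℕ} {f : ℝ → ℝ} (hp : 0 < p)
    (hq : 0 < q) (hf : ∀ y, 0 < y → betaLogMoment p y k = f y) (hD : HasDerivAt f D q) :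
    betaLogMoment p q (k + 1) = D :=
  ((hasDerivAt_betaLogMoment hp hq k).congr_of_eventuallyEq
    (eventually_of_mem (Ioi_mem_nhds hq) fun y hy => (hf y hy).symm)).unique hD

theorem betaLogMoment_one {p q : ℝ} (hp : 0 < p) (hq : 0 < q) :
    betaLogMoment p q 1 = realBeta p q * (digamma q - digamma (p + q)) :=
  betaLogMoment_succ_eq_of_hasDerivAt hp hq (fun _ hy => betaLogMoment_zero hp hy)
    (hasDerivAt_realBeta_right hp hq)

theorem betaLogMoment_two {p q : ℝ} (hp : 0 < p) (hq : 0 < q) :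
    betaLogMoment p q 2 = realBeta p q *
      ((digamma q - digamma (p + q)) ^ 2 + (trigamma q - trigamma (p + q))) := by
  have hψ : HasDerivAt (fun y => digamma y - digamma (p + y))
      (trigamma q - trigamma (p + q)) q :=
    (hasDerivAt_digamma hq).sub ((hasDerivAt_digamma (add_pos hp hq)).comp_const_add p q)
  refine betaLogMoment_succ_eq_of_hasDerivAt hp hq (fun _ hy => betaLogMoment_one hp hy)
    (((hasDerivAt_realBeta_right hp hq).mul hψ).congr_deriv ?_)
  ring

theorem integral_add_log_sq_mul_betaLogIntegrand {p q : ℝ} (hp : 0 < p) (hq : 0 < q) (c : ℝ) :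
    ∫ u in Ioo 0 1, (c + log (1 - u)) ^ 2 * betaLogIntegrand p q 0 u =
      realBeta p q * ((c + (digamma q - digamma (p + q))) ^ 2 +
        (trigamma q - trigamma (p + q))) := by
  have hexpand : (fun u => (c + log (1 - u)) ^ 2 * betaLogIntegrand p q 0 u) = fun u =>
      c ^ 2 * betaLogIntegrand p q 0 u +
        (2 * c * betaLogIntegrand p q 1 u + betaLogIntegrand p q 2 u) := by
    funext u
    simp only [betaLogIntegrand]
    ring
  have hint := integrableOn_betaLogIntegrand hp hq
  rw [hexpand, integral_add, integral_add, integral_const_mul, integral_const_mul]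
  · have h0 := betaLogMoment_zero hp hq
    have h1 := betaLogMoment_one hp hq
    have h2 := betaLogMoment_two hp hq
    rw [betaLogMoment] at h0 h1 h2
    rw [h0, h1, h2]
    ring
  · exact (hint 1).const_mul _
  · exact hint 2
  · exact (hint 0).const_mul _
  · exact ((hint 1).const_mul _).add (hint 2)

theorem image_exp_neg_mul_Ioi {l : ℝ} (hl : 0 < l) :
    (fun x => exp (-(l * x))) '' Ioi 0 = Ioo 0 1 := by
  ext u
  constructor
  · rintro ⟨x, hx, rfl⟩
    exact ⟨exp_pos _, exp_lt_one_iff.2 (neg_neg_of_pos (mul_pos hl hx))⟩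
  · rintro ⟨hu0, hu1⟩
    refine ⟨-log u / l, div_pos (neg_pos.2 (log_neg hu0 hu1)) hl, ?_⟩
    simp only [mul_div_cancel₀ _ hl.ne', neg_neg, exp_log hu0]

theorem integral_Ioi_exp_neg_mul_comp {l : ℝ} (hl : 0 < l) (g : ℝ → ℝ) :
    ∫ x in Ioi 0, l * exp (-(l * x)) * g (exp (-(l * x))) = ∫ u in Ioo 0 1, g u := by
  have hderiv : ∀ x ∈ Ioi (0 : ℝ), HasDerivWithinAt (fun x => exp (-(l * x)))
      (-(l * exp (-(l * x)))) (Ioi 0) x := fun x _ =>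
    (((hasDerivAt_id' x).const_mul l).fun_neg.exp.congr_deriv (by ring)).hasDerivWithinAt
  have hinj : InjOn (fun x => exp (-(l * x))) (Ioi 0) := fun x _ y _ h => by
    simpa [hl.ne'] using h
  rw [← image_exp_neg_mul_Ioi hl, integral_image_eq_integral_abs_deriv_smul measurableSet_Ioi
    hderiv hinj]
  refine setIntegral_congr_fun measurableSet_Ioi fun x _ => ?_
  rw [abs_neg, abs_of_pos (by positivity), smul_eq_mul]

theorem geScoreShape_sq_mul_geDensity_rpow (a : ℝ) {l v x : ℝ} (hl : 0 < l) (hv : 0 ≤ v)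
    (hx : 0 < x) :
    geScoreShape l v x ^ 2 * geDensity l v x ^ (1 + a) =
      l * exp (-(l * x)) * (l ^ a * v ^ (1 + a) * ((1 / v + log (1 - exp (-(l * x)))) ^ 2 *
        betaLogIntegrand (1 + a) ((1 + a) * (v - 1) + 1) 0 (exp (-(l * x))))) := by
  have hE : exp (-(l * x)) ∈ Ioo 0 1 := image_exp_neg_mul_Ioi hl ▸ mem_image_of_mem _ hx
  rw [geScoreShape]
  set E := exp (-(l * x))
  have hE0 : 0 < E := hE.1
  have h1E : 0 < 1 - E := sub_pos.2 hE.2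
  have hdens : geDensity l v x ^ (1 + a) =
      l * E * (l ^ a * v ^ (1 + a) * (E ^ a * (1 - E) ^ ((1 + a) * (v - 1)))) := by
    rw [geDensity, mul_rpow (by positivity) (rpow_nonneg h1E.le _),
      mul_rpow (by positivity) hE0.le, mul_rpow hl.le hv, ← rpow_mul h1E.le, rpow_add hl,
      rpow_add hE0, rpow_one, rpow_one]
    ring_nf
  rw [hdens, betaLogIntegrand]
  ring_nf

theorem integral_geScoreShape_sq_mul_geDensity_rpow (a : ℝ) {l v : ℝ} (hl : 0 < l)
    (hv : 0 ≤ v) :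
    ∫ x in Ioi 0, geScoreShape l v x ^ 2 * geDensity l v x ^ (1 + a) =
      l ^ a * v ^ (1 + a) * ∫ u in Ioo 0 1,
        (1 / v + log (1 - u)) ^ 2 * betaLogIntegrand (1 + a) ((1 + a) * (v - 1) + 1) 0 u := by
  rw [← integral_const_mul, ← integral_Ioi_exp_neg_mul_comp hl]
  exact setIntegral_congr_fun measurableSet_Ioi fun x hx =>
    geScoreShape_sq_mul_geDensity_rpow a hl hv hx

/-- For `α ≥ 0`, `λ > 0` and `ν > 1`,
`∫₀^∞ u_ν(x)² f(x; λ, ν)^(1+α) dx = λ^α ν^(α−1) B(1+α, (1+α)(ν−1)+1) ×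
  { ν² (ψ'((1+α)(ν−1)+1) − ψ'(ν(1+α)+1)) + (1 + ν (ψ((1+α)(ν−1)+1) − ψ(ν(1+α)+1)))² }`. -/
theorem ge_weighted_score_shape_sq_integral (a l v : ℝ) (ha : 0 ≤ a) (hl : 0 < l)
    (hv : 1 < v) :
    ∫ x in Ioi (0 : ℝ), geScoreShape l v x ^ 2 * geDensity l v x ^ (1 + a) =
      l ^ a * v ^ (a - 1) * realBeta (1 + a) ((1 + a) * (v - 1) + 1) *
        (v ^ 2 * (trigamma ((1 + a) * (v - 1) + 1) - trigamma (v * (1 + a) + 1)) +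
          (1 + v * (digamma ((1 + a) * (v - 1) + 1) - digamma (v * (1 + a) + 1))) ^ 2) := by
  have hv0 : 0 < v := by linarith
  have hp : 0 < 1 + a := by linarith
  have hq : 0 < (1 + a) * (v - 1) + 1 := by nlinarith
  have hpq : 1 + a + ((1 + a) * (v - 1) + 1) = v * (1 + a) + 1 := by ring
  have hvpow : v ^ (1 + a) = v ^ (a - 1) * v ^ 2 := by
    rw [← rpow_natCast, ← rpow_add hv0]
    ring_nf
  rw [integral_geScoreShape_sq_mul_geDensity_rpow a hl hv0.le,
    integral_add_log_sq_mul_betaLogIntegrand hp hq, hpq, hvpow]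
  field_simp
  ring
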